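/- Pullback change-of-base for LTSs preserves strong bisimulations: given LTSs p : G → A and q : H → A over alphabet graph A, a morphism ξ : B → A of alphabets, and a strong bisimulation morphism f : G → H over A, the induced morphism between the pullbacks ξ*G → ξ*H is again a strong bisimulation over B. -/
import Mathlib


/-- A graph: vertices, edges, source and target. -/
structure Gph where
  V : Type*
  E : Type*
  src : E → V
  tgt : E → V

/-- A morphism of graphs. -/
structure GphHom (G H : Gph) where
  vmap : G.V → H.V
  emap : G.E → H.E
  hsrc : ∀ e, vmap (G.src e) = H.src (emap e)
  htgt : ∀ e, vmap (G.tgt e) = H.tgt (emap e)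

/-- `f : G → H` is a functional strong bisimulation over the alphabet `B`, where
`p : G → B` and `q : H → B` exhibit `G` and `H` as LTSs over `B`: `f` is a morphism
over `B` (so transitions are preserved with matching labels), and every transition
from `f x` in `H` lifts to a transition from `x` in `G` mapping onto it. -/
def IsFunBisimOver {G H B : Gph} (p : GphHom G B) (q : GphHom H B)
    (f : GphHom G H) : Prop :=
  (∀ v, q.vmap (f.vmap v) = p.vmap v) ∧
  (∀ e, q.emap (f.emap e) = p.emap e) ∧
  (∀ (x : G.V) (e' : H.E), H.src e' = f.vmap x →
    ∃ e : G.E, G.src e = x ∧ f.emap e = e')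

/-- The pullback of an LTS `p : G → A` along a morphism of alphabets `ξ : B → A`:
states are pairs of a state of `G` and a vertex of `B` agreeing under `p` and `ξ`,
transitions likewise. -/
def pbGph {G B A : Gph} (p : GphHom G A) (ξ : GphHom B A) : Gph where
  V := {x : G.V × B.V // p.vmap x.1 = ξ.vmap x.2}
  E := {e : G.E × B.E // p.emap e.1 = ξ.emap e.2}
  src := fun e => ⟨(G.src e.1.1, B.src e.1.2), by
    rw [p.hsrc, e.2, ξ.hsrc]⟩
  tgt := fun e => ⟨(G.tgt e.1.1, B.tgt e.1.2), by
    rw [p.htgt, e.2, ξ.htgt]⟩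

/-- The projection of the pullback LTS to the new alphabet `B`. -/
def pbProj {G B A : Gph} (p : GphHom G A) (ξ : GphHom B A) :
    GphHom (pbGph p ξ) B where
  vmap := fun x => x.1.2
  emap := fun e => e.1.2
  hsrc := fun _ => rfl
  htgt := fun _ => rfl

/-- The morphism induced between pullbacks by a morphism `f : G → H` over `A`. -/
def pbMap {G H B A : Gph} (p : GphHom G A) (q : GphHom H A) (ξ : GphHom B A)
    (f : GphHom G H)
    (hV : ∀ v, q.vmap (f.vmap v) = p.vmap v)
    (hE : ∀ e, q.emap (f.emap e) = p.emap e) :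
    GphHom (pbGph p ξ) (pbGph q ξ) where
  vmap := fun x => ⟨(f.vmap x.1.1, x.1.2), by rw [hV, x.2]⟩
  emap := fun e => ⟨(f.emap e.1.1, e.1.2), by rw [hE, e.2]⟩
  hsrc := fun e => by
    apply Subtype.ext
    exact Prod.ext (f.hsrc e.1.1) rfl
  htgt := fun e => by
    apply Subtype.ext
    exact Prod.ext (f.htgt e.1.1) rfl

/-- Pullback change-of-base for LTSs preserves functional strong bisimulations:
given LTSs `p : G → A` and `q : H → A`, a morphism of alphabets `ξ : B → A`, and a
functional strong bisimulation `f : G → H` over `A`, the induced morphism between the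
pullbacks `ξ*G → ξ*H` is again a functional strong bisimulation over `B`. -/
theorem pullback_preserves_fun_bisim {G H B A : Gph}
    (p : GphHom G A) (q : GphHom H A) (ξ : GphHom B A) (f : GphHom G H)
    (hV : ∀ v, q.vmap (f.vmap v) = p.vmap v)
    (hE : ∀ e, q.emap (f.emap e) = p.emap e)
    (hlift : ∀ (x : G.V) (e' : H.E), H.src e' = f.vmap x →
      ∃ e : G.E, G.src e = x ∧ f.emap e = e') :
    IsFunBisimOver (pbProj p ξ) (pbProj q ξ) (pbMap p q ξ f hV hE) := by
  refine ⟨fun _ => rfl, fun _ => rfl, ?_⟩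
  rintro ⟨⟨x₁, x₂⟩, hx⟩ ⟨⟨e₁, e₂⟩, he⟩ hsrc
  have h1 : H.src e₁ = f.vmap x₁ := congrArg (fun z => z.1.1) hsrc
  have h2 : B.src e₂ = x₂ := congrArg (fun z => z.1.2) hsrc
  obtain ⟨e, hes, hef⟩ := hlift x₁ e₁ h1
  refine ⟨⟨(e, e₂), by rw [← hE, hef, he]⟩, ?_, ?_⟩
  · exact Subtype.ext (Prod.ext hes h2)
  · exact Subtype.ext (Prod.ext hef rfl)
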